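/- arXiv:1703.01691 — 3 statements merged into one kernel-verified Lean document; each statement's English description precedes it below -/
import Mathlib

section
/- Every tree on n ≥ 2 vertices admits a partition of its edge set into at most ⌈3(n−1)/4⌉ paths. -/
/-!
The edges of a forest can be split into paths whose endpoints are pairwise distinct. Remove
a leaf edge `ℓa` (with `ℓ` the leaf) and split the rest by induction. If `a` is an endpoint
of one of the paths, prolong that path by `ℓa`; otherwise add `ℓa` as a new path. Since `ℓ`
lies on no other edge, it is not yet an endpoint, so the endpoints stay distinct. Hence a
tree on `n` vertices is split into `k` paths with `2k ≤ n`, and `n / 2 ≤ ⌈3(n-1)/4⌉`.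
-/

open Function

theorem Function.Injective.update_of_notMem_range {α β : Type*} [DecidableEq α] {f : α → β}
    (hf : Injective f) (a : α) {b : β} (hb : b ∉ Set.range f) : Injective (update f a b) := by
  intro x y h
  simp only [update_apply] at h
  split_ifs at h with hx hy hy
  · exact hx.trans hy.symm
  · exact (hb ⟨y, h.symm⟩).elim
  · exact (hb ⟨x, h⟩).elim
  · exact hf h

namespace SimpleGraph

variable {V : Type*} {G : SimpleGraph V}

theorem IsAcyclic.exists_adj_forall_adj_eq [Finite V] (hG : G.IsAcyclic) {x y : V}
    (hxy : G.Adj x y) : ∃ ℓ a, G.Adj ℓ a ∧ ∀ w, G.Adj ℓ w → w = a := by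
  have : Nonempty V := ⟨x⟩
  obtain ⟨u, v, p, hp, hmax⟩ := Walk.exists_isPath_forall_isPath_length_le_length G
  have hnil : ¬p.Nil := fun hnil => by
    simpa [hnil.length_eq_zero] using hmax _ _ _ (Walk.IsPath.of_adj hxy)
  refine ⟨u, p.snd, p.adj_snd hnil, fun w hadj => hG.eq_snd_of_adj_start hp hadj ?_⟩
  -- otherwise `w` followed by `p` would be a longer path
  by_contra hw
  simpa using hmax _ _ _ (hp.cons (h := hadj.symm) hw)

theorem IsAcyclic.exists_leaf_edge_mem [Finite V] (hG : G.IsAcyclic) {S : Set (Sym2 V)}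
    (hS : S ⊆ G.edgeSet) (hne : S.Nonempty) :
    ∃ ℓ a, G.Adj ℓ a ∧ s(ℓ, a) ∈ S ∧ ∀ e ∈ S \ {s(ℓ, a)}, ℓ ∉ e := by
  have hle : fromEdgeSet S ≤ G := (fromEdgeSet_le G).2 fun e he => hS he.1
  obtain ⟨e, he⟩ := hne
  induction e using Sym2.ind with | _ x y => ?_
  obtain ⟨ℓ, a, hla, hleaf⟩ := (hG.anti hle).exists_adj_forall_adj_eq
    (show (fromEdgeSet S).Adj x y from ⟨he, (hS he).ne⟩)
  refine ⟨ℓ, a, hle hla, hla.1, fun e ⟨heS, he_ne⟩ hℓ => he_ne ?_⟩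
  obtain ⟨w, rfl⟩ := Sym2.mem_iff_exists.1 hℓ
  rw [hleaf w ⟨heS, (hS heS).ne⟩, Set.mem_singleton_iff]

/-- Each path is bundled with its endpoints, so that single paths can be replaced using
`Function.update`. -/
structure IsPathPartition {ι : Type*} (S : Set (Sym2 V)) (P : ι → Σ u v : V, G.Walk u v) :
    Prop where
  isPath : ∀ i, (P i).2.2.IsPath
  existsUnique_mem_edges : ∀ e ∈ S, ∃! i, e ∈ (P i).2.2.edges
  mem_of_mem_edges : ∀ i, ∀ e ∈ (P i).2.2.edges, e ∈ S

def endpoints {ι : Type*} (P : ι → Σ u v : V, G.Walk u v) : ι ⊕ ι → V :=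
  Sum.elim (fun i => (P i).1) (fun i => (P i).2.1)

universe w

variable {ι : Type w} {S : Set (Sym2 V)} {P : ι → Σ u v : V, G.Walk u v} {ℓ a : V}

theorem endpoints_update_reverse [DecidableEq ι] (i : ι) :
    endpoints (update P i ⟨(P i).2.1, (P i).1, (P i).2.2.reverse⟩) =
      endpoints P ∘ Equiv.swap (Sum.inl i) (Sum.inr i) := by
  funext x
  rcases x with j | j <;> obtain rfl | hj := eq_or_ne j i
  · simp only [endpoints, comp_apply, Equiv.swap_apply_left, Sum.elim_inl, Sum.elim_inr]
    rw [update_self]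
  · simp only [endpoints, comp_apply, Sum.elim_inl]
    rw [Equiv.swap_apply_of_ne_of_ne (by simpa) (by simp), update_of_ne hj, Sum.elim_inl]
  · simp only [endpoints, comp_apply, Equiv.swap_apply_right, Sum.elim_inl, Sum.elim_inr]
    rw [update_self]
  · simp only [endpoints, comp_apply, Sum.elim_inr]
    rw [Equiv.swap_apply_of_ne_of_ne (by simp) (by simpa), update_of_ne hj, Sum.elim_inr]

theorem endpoints_update_fst [DecidableEq ι] (i : ι) {u : V} (q : G.Walk u (P i).2.1) :
    endpoints (update P i ⟨u, (P i).2.1, q⟩) = update (endpoints P) (Sum.inl i) u := by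
  funext x
  rcases x with j | j <;> obtain rfl | hj := eq_or_ne j i
  · simp only [endpoints, Sum.elim_inl, update_self]
  · simp only [endpoints, Sum.elim_inl]
    rw [update_of_ne hj, update_of_ne (by simpa), Sum.elim_inl]
  · simp only [endpoints, Sum.elim_inr]
    rw [update_self, update_of_ne (by simp), Sum.elim_inr]
  · simp only [endpoints, Sum.elim_inr]
    rw [update_of_ne hj, update_of_ne (by simp), Sum.elim_inr]

theorem injective_endpoints_option_elim (hinj : Injective (endpoints P)) (hla : G.Adj ℓ a)
    (hℓ : ℓ ∉ Set.range (endpoints P)) (ha : a ∉ Set.range (endpoints P)) :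
    Injective (endpoints fun o : Option ι => o.elim ⟨ℓ, a, hla.toWalk⟩ P) := by
  obtain ⟨hfst, hsnd, hne⟩ := Sum.elim_injective.1 hinj
  have hℓ' (j : ι) : (P j).1 ≠ ℓ ∧ (P j).2.1 ≠ ℓ :=
    ⟨(hℓ ⟨.inl j, ·⟩), (hℓ ⟨.inr j, ·⟩)⟩
  have ha' (j : ι) : (P j).1 ≠ a ∧ (P j).2.1 ≠ a :=
    ⟨(ha ⟨.inl j, ·⟩), (ha ⟨.inr j, ·⟩)⟩
  rintro ((_ | i) | (_ | i)) ((_ | j) | (_ | j)) h <;>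
    simp only [endpoints, Sum.elim_inl, Sum.elim_inr, Option.elim] at h <;>
    grind [Adj.ne, Injective]

namespace IsPathPartition

theorem notMem_support (hP : IsPathPartition S P) (hinj : Injective (endpoints P))
    (hℓ : ∀ e ∈ S, ℓ ∉ e) (i : ι) : ℓ ∉ (P i).2.2.support := by
  have hnil : ¬(P i).2.2.Nil := Walk.not_nil_of_ne fun h => Sum.inl_ne_inr (hinj h)
  rw [Walk.mem_support_iff_exists_mem_edges_of_not_nil hnil]
  rintro ⟨e, he, hℓe⟩
  exact hℓ e (hP.mem_of_mem_edges i e he) hℓe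

theorem notMem_range_endpoints (hP : IsPathPartition S P) (hinj : Injective (endpoints P))
    (hℓ : ∀ e ∈ S, ℓ ∉ e) : ℓ ∉ Set.range (endpoints P) := by
  rintro ⟨i | i, rfl⟩
  · exact hP.notMem_support hinj hℓ i (P i).2.2.start_mem_support
  · exact hP.notMem_support hinj hℓ i (P i).2.2.end_mem_support

theorem update_union [DecidableEq ι] {T : Set (Sym2 V)} (hP : IsPathPartition S P)
    (hST : Disjoint S T) {i : ι} {q : Σ u v : V, G.Walk u v} (hq : q.2.2.IsPath)
    (hedges : ∀ e, e ∈ q.2.2.edges ↔ e ∈ (P i).2.2.edges ∨ e ∈ T) :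
    IsPathPartition (S ∪ T) (update P i q) := by
  have hT : ∀ j, ∀ e ∈ (P j).2.2.edges, e ∉ T := fun j e he =>
    hST.notMem_of_mem_left (hP.mem_of_mem_edges j e he)
  refine ⟨fun j => ?_, fun e he => ?_, fun j e he => ?_⟩
  · obtain rfl | hj := eq_or_ne j i
    · rwa [update_self]
    · rw [update_of_ne hj]; exact hP.isPath j
  · rcases he with he | he
    · obtain ⟨j, hj, huniq⟩ := hP.existsUnique_mem_edges e he
      refine ⟨j, ?_, fun k (hk : e ∈ (update P i q k).2.2.edges) => ?_⟩
      · show e ∈ (update P i q j).2.2.edges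
        obtain rfl | hji := eq_or_ne j i
        · rw [update_self, hedges]; exact Or.inl hj
        · rwa [update_of_ne hji]
      · obtain rfl | hki := eq_or_ne k i
        · rw [update_self, hedges] at hk
          exact huniq k (hk.resolve_right (hST.notMem_of_mem_left he))
        · rw [update_of_ne hki] at hk
          exact huniq k hk
    · refine ⟨i, ?_, fun k (hk : e ∈ (update P i q k).2.2.edges) => ?_⟩
      · show e ∈ (update P i q i).2.2.edges
        rw [update_self, hedges]; exact Or.inr he
      by_contra hki
      rw [update_of_ne hki] at hk
      exact hT k e hk he
  · obtain rfl | hji := eq_or_ne j i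
    · rw [update_self, hedges] at he
      exact he.imp (hP.mem_of_mem_edges j e) id
    · rw [update_of_ne hji] at he
      exact Or.inl (hP.mem_of_mem_edges j e he)

theorem update_reverse [DecidableEq ι] (hP : IsPathPartition S P) (i : ι) :
    IsPathPartition S (update P i ⟨(P i).2.1, (P i).1, (P i).2.2.reverse⟩) := by
  simpa using hP.update_union (T := ∅) (Set.disjoint_empty S) (hP.isPath i).reverse
    (by simp [Walk.edges_reverse])

theorem update_cons [DecidableEq ι] (hP : IsPathPartition S P) {i : ι} (hi : (P i).1 = a)
    (hla : G.Adj ℓ a) (hℓ : ℓ ∉ (P i).2.2.support) (hnew : s(ℓ, a) ∉ S) :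
    IsPathPartition (insert s(ℓ, a) S)
      (update P i ⟨ℓ, (P i).2.1, Walk.cons (hi ▸ hla) (P i).2.2⟩) := by
  rw [← Set.union_singleton]
  exact hP.update_union (Set.disjoint_singleton_right.2 hnew) ((hP.isPath i).cons hℓ)
    (fun e => by simp [Walk.edges_cons, hi, or_comm])

theorem option_elim (hP : IsPathPartition S P) (hla : G.Adj ℓ a) (hnew : s(ℓ, a) ∉ S) :
    IsPathPartition (insert s(ℓ, a) S)
      fun o : Option ι => o.elim ⟨ℓ, a, hla.toWalk⟩ P := by
  refine ⟨?_, fun e he => ?_, ?_⟩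
  · rintro (_ | i)
    exacts [Walk.IsPath.of_adj hla, hP.isPath i]
  · rcases he with rfl | he
    · refine ⟨none, by simp, ?_⟩
      rintro (_ | i) hi
      exacts [rfl, (hnew (hP.mem_of_mem_edges i _ hi)).elim]
    · obtain ⟨i, hi, huniq⟩ := hP.existsUnique_mem_edges e he
      refine ⟨some i, hi, ?_⟩
      rintro (_ | j) hj
      · simp only [Option.elim, Adj.edges_toWalk, List.mem_singleton] at hj
        exact (hnew (hj ▸ he)).elim
      · rw [huniq j hj]
  · rintro (_ | i) e he
    · simp only [Option.elim, Adj.edges_toWalk, List.mem_singleton] at he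
      exact Or.inl he
    · exact Or.inr (hP.mem_of_mem_edges i e he)

theorem exists_insert (hP : IsPathPartition S P) (hinj : Injective (endpoints P))
    (hla : G.Adj ℓ a) (hℓ : ∀ e ∈ S, ℓ ∉ e) :
    ∃ (κ : Type w) (Q : κ → Σ u v : V, G.Walk u v),
      IsPathPartition (insert s(ℓ, a) S) Q ∧ Injective (endpoints Q) := by
  classical
  have hnew : s(ℓ, a) ∉ S := fun h => hℓ _ h (Sym2.mem_mk_left ℓ a)
  by_cases ha : a ∈ Set.range (endpoints P)
  · obtain ⟨P', hP', hinj', i, hi⟩ : ∃ P' : ι → Σ u v : V, G.Walk u v,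
        IsPathPartition S P' ∧ Injective (endpoints P') ∧ ∃ i, (P' i).1 = a := by
      obtain ⟨i | i, hi⟩ := ha
      · exact ⟨P, hP, hinj, i, hi⟩
      · refine ⟨_, hP.update_reverse i, ?_, i, ?_⟩
        · rw [endpoints_update_reverse]
          exact hinj.comp (Equiv.injective _)
        · rw [update_self]
          exact hi
    refine ⟨ι, _, hP'.update_cons hi hla (hP'.notMem_support hinj' hℓ i) hnew, ?_⟩
    rw [endpoints_update_fst]
    exact hinj'.update_of_notMem_range _ (hP'.notMem_range_endpoints hinj' hℓ)
  · exact ⟨Option ι, _, hP.option_elim hla hnew,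
      injective_endpoints_option_elim hinj hla (hP.notMem_range_endpoints hinj hℓ) ha⟩

end IsPathPartition

theorem IsAcyclic.exists_isPathPartition [Finite V] (hG : G.IsAcyclic) {S : Set (Sym2 V)}
    (hS : S ⊆ G.edgeSet) :
    ∃ (ι : Type) (P : ι → Σ u v : V, G.Walk u v),
      IsPathPartition S P ∧ Injective (endpoints P) := by
  induction hn : S.ncard generalizing S with
  | zero =>
    obtain rfl : S = ∅ := (Set.ncard_eq_zero (Set.toFinite S)).1 hn
    exact ⟨Empty, isEmptyElim, ⟨isEmptyElim, by simp, isEmptyElim⟩,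
      injective_of_subsingleton _⟩
  | succ n ih =>
    obtain ⟨ℓ, a, hla, hmem, hleaf⟩ :=
      hG.exists_leaf_edge_mem hS (Set.nonempty_of_ncard_ne_zero (by omega))
    obtain ⟨ι, P, hP, hinj⟩ := ih (S := S \ {s(ℓ, a)}) (Set.sdiff_subset.trans hS)
      (by rw [Set.ncard_sdiff_singleton_of_mem hmem, hn]; rfl)
    simpa [Set.insert_eq_of_mem hmem] using hP.exists_insert hinj hla hleaf

end SimpleGraph

theorem stmt4_general {V : Type*} [Fintype V] (G : SimpleGraph V)
    (hT : G.IsTree) :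
    ∃ (k : ℕ) (u v : Fin k → V) (p : ∀ i, G.Walk (u i) (v i)),
      (∀ i, (p i).IsPath) ∧
      (∀ e ∈ G.edgeSet, ∃! i, e ∈ (p i).edges) ∧
      k ≤ (3 * (Fintype.card V - 1) + 3) / 4 := by
  obtain ⟨ι, P, hP, hinj⟩ := hT.isAcyclic.exists_isPathPartition subset_rfl
  have : Finite (ι ⊕ ι) := Finite.of_injective _ hinj
  have : Finite ι := Finite.of_injective (Sum.inl : ι → ι ⊕ ι) Sum.inl_injective
  have hcard : 2 * Nat.card ι ≤ Fintype.card V := by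
    simpa [two_mul, Nat.card_sum] using Nat.card_le_card_of_injective _ hinj
  let e := Finite.equivFin ι
  refine ⟨Nat.card ι, fun i => (P (e.symm i)).1, fun i => (P (e.symm i)).2.1,
    fun i => (P (e.symm i)).2.2, fun i => hP.isPath _,
    fun x hx => e.existsUnique_congr_left.1 (hP.existsUnique_mem_edges x hx), by omega⟩

/-- Every tree on `n ≥ 2` vertices admits a partition of its edge set into at most
`⌈3(n-1)/4⌉` paths (written `(3*(n-1) + 3) / 4` in natural-number arithmetic). -/
theorem stmt4 {V : Type*} [Fintype V] (G : SimpleGraph V)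
    (hT : G.IsTree) (hn : 2 ≤ Fintype.card V) :
    ∃ (k : ℕ) (u v : Fin k → V) (p : ∀ i, G.Walk (u i) (v i)),
      (∀ i, (p i).IsPath) ∧
      (∀ e ∈ G.edgeSet, ∃! i, e ∈ (p i).edges) ∧
      k ≤ (3 * (Fintype.card V - 1) + 3) / 4 :=
  stmt4_general G hT
end

section
/- The edges of every maximal outerplanar graph on n ≥ 2 vertices can be partitioned into two trees (two edge-disjoint spanning forests whose union is the whole edge set, each of which is a tree). -/
/-- Maximal outerplanar graphs via the standard inductive (stacking) construction. -/
def IsMaxOuterplanar {V : Type*} [Fintype V] [DecidableEq V] (G : SimpleGraph V) : Prop :=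
  ∃ σ : Fin (Fintype.card V) ≃ V,
    (∀ h : 2 ≤ Fintype.card V, G.Adj (σ ⟨0, by omega⟩) (σ ⟨1, by omega⟩)) ∧
    (∀ j : Fin (Fintype.card V), 2 ≤ (j : ℕ) →
      ∃ a b : Fin (Fintype.card V), a < j ∧ b < j ∧ a ≠ b ∧ G.Adj (σ a) (σ b) ∧
        ∀ i : Fin (Fintype.card V), i < j → (G.Adj (σ i) (σ j) ↔ i = a ∨ i = b))

/-!
Order the vertices `v₀, v₁, …` as in the stacking construction. The edge `v₀v₁` goes to the
first tree. Each later vertex `vⱼ` has exactly two earlier neighbours, which are distinct, so one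
of them is not `v₀`: the edge to that one goes to the second tree and the other edge to the first.
Every new edge is pendant, so at each stage the first tree spans `{v₀, …, vⱼ}` and the second
spans `{v₁, …, vⱼ}`, and together they use every edge among these vertices.
-/

namespace SimpleGraph.Subgraph

variable {V : Type*} {G : SimpleGraph V} {H : G.Subgraph} {x y : V}

lemma Connected.sup_subgraphOfAdj (hH : H.Connected) (hx : x ∈ H.verts) (hxy : G.Adj x y) :
    (H ⊔ G.subgraphOfAdj hxy).Connected :=
  connected_sup hH.preconnected (subgraphOfAdj_connected hxy).preconnected ⟨x, hx, by simp⟩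

lemma isAcyclic_spanningCoe_sup_subgraphOfAdj (hH : H.spanningCoe.IsAcyclic) (hy : y ∉ H.verts)
    (hxy : G.Adj x y) : (H ⊔ G.subgraphOfAdj hxy).spanningCoe.IsAcyclic := by
  rw [sup_spanningCoe, spanningCoe_subgraphOfAdj]
  refine hH.sup_edge_of_not_reachable fun ⟨p⟩ ↦ hy ?_
  have hp : ¬ p.reverse.Nil := Walk.not_nil_of_ne hxy.ne'
  exact (p.reverse.adj_snd hp).fst_mem

lemma isAcyclic_coe_of_isAcyclic_spanningCoe (hH : H.spanningCoe.IsAcyclic) : H.coe.IsAcyclic :=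
  hH.comap ⟨Subtype.val, id⟩ Subtype.val_injective

lemma induce_insert_eq_sup {S : Set V} {v a b : V} (ha : a ∈ S) (hb : b ∈ S)
    (hnbr : ∀ u ∈ S, G.Adj u v ↔ u = a ∨ u = b) (hav : G.Adj a v) (hbv : G.Adj b v) :
    (⊤ : G.Subgraph).induce (insert v S) =
      (⊤ : G.Subgraph).induce S ⊔ G.subgraphOfAdj hav ⊔ G.subgraphOfAdj hbv := by
  ext u w
  · simp only [induce_verts, verts_sup, subgraphOfAdj_verts]
    grind
  · simp only [induce_adj, top_adj, sup_adj, subgraphOfAdj_adj, Set.mem_insert_iff, Sym2.eq_iff]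
    grind [SimpleGraph.irrefl, SimpleGraph.adj_comm]

/-- Acyclicity is tracked on `spanningCoe`, whose vertex type does not change as edges are
added. -/
structure IsTreeSplit (H₁ H₂ : G.Subgraph) (S : Set V) (r : V) : Prop where
  sup_eq : H₁ ⊔ H₂ = (⊤ : G.Subgraph).induce S
  disjoint : Disjoint H₁.edgeSet H₂.edgeSet
  verts_left : H₁.verts = S
  verts_right : H₂.verts = S \ {r}
  connected_left : H₁.Connected
  connected_right : H₂.Connected
  isAcyclic_left : H₁.spanningCoe.IsAcyclic
  isAcyclic_right : H₂.spanningCoe.IsAcyclic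

lemma isTreeSplit_subgraphOfAdj_singletonSubgraph (hxy : G.Adj x y) :
    IsTreeSplit (G.subgraphOfAdj hxy) (G.singletonSubgraph y) {x, y} x where
  sup_eq := by
    rw [← subgraphOfAdj_eq_induce hxy, sup_eq_left]
    exact singletonSubgraph_snd_le_subgraphOfAdj
  disjoint := by simp
  verts_left := rfl
  verts_right := by
    rw [Set.insert_sdiff_of_mem _ (Set.mem_singleton x),
      Set.sdiff_singleton_eq_self (by simpa using hxy.ne)]
    rfl
  connected_left := subgraphOfAdj_connected hxy
  connected_right := singletonSubgraph_connected
  isAcyclic_left := by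
    rw [spanningCoe_subgraphOfAdj, ← bot_sup_eq (fromEdgeSet _)]
    exact isAcyclic_bot.sup_edge_of_not_reachable (by simpa using hxy.ne)
  isAcyclic_right := isAcyclic_bot.anti fun _ _ h ↦ h.elim

namespace IsTreeSplit

variable {H₁ H₂ : G.Subgraph} {S : Set V} {r v a b : V}

lemma sup_subgraphOfAdj (h : IsTreeSplit H₁ H₂ S r) (ha : a ∈ S) (hb : b ∈ S) (hbr : b ≠ r)
    (hv : v ∉ S) (hvr : v ≠ r) (hab : a ≠ b) (hnbr : ∀ u ∈ S, G.Adj u v ↔ u = a ∨ u = b)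
    (hav : G.Adj a v) (hbv : G.Adj b v) :
    IsTreeSplit (H₁ ⊔ G.subgraphOfAdj hav) (H₂ ⊔ G.subgraphOfAdj hbv) (insert v S) r where
  sup_eq := by
    rw [induce_insert_eq_sup ha hb hnbr hav hbv, ← h.sup_eq]
    ac_rfl
  disjoint := by
    have hbv_left : s(b, v) ∉ H₁.edgeSet := fun he ↦
      hv (h.verts_left ▸ H₁.mem_verts_of_mem_edge he (Sym2.mem_mk_right b v))
    have hav_right : s(a, v) ∉ H₂.edgeSet := fun he ↦
      hv (h.verts_right ▸ H₂.mem_verts_of_mem_edge he (Sym2.mem_mk_right a v)).1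
    simp only [edgeSet_sup, edgeSet_subgraphOfAdj, Set.disjoint_union_left,
      Set.disjoint_union_right, Set.disjoint_singleton_left, Set.disjoint_singleton_right]
    exact ⟨⟨h.disjoint, hav_right⟩, by simp [hbv_left, hab.symm, hbv.ne]⟩
  verts_left := by
    simp only [verts_sup, h.verts_left, subgraphOfAdj_verts]
    grind
  verts_right := by
    simp only [verts_sup, h.verts_right, subgraphOfAdj_verts]
    grind
  connected_left := h.connected_left.sup_subgraphOfAdj (h.verts_left ▸ ha) hav
  connected_right := h.connected_right.sup_subgraphOfAdj (by simp [h.verts_right, hb, hbr]) hbv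
  isAcyclic_left :=
    isAcyclic_spanningCoe_sup_subgraphOfAdj h.isAcyclic_left (h.verts_left ▸ hv) hav
  isAcyclic_right :=
    isAcyclic_spanningCoe_sup_subgraphOfAdj h.isAcyclic_right (by simp [h.verts_right, hv]) hbv

lemma isTree_coe_left (h : IsTreeSplit H₁ H₂ S r) : H₁.coe.IsTree :=
  ⟨h.connected_left.coe, isAcyclic_coe_of_isAcyclic_spanningCoe h.isAcyclic_left⟩

lemma isTree_coe_right (h : IsTreeSplit H₁ H₂ S r) : H₂.coe.IsTree :=
  ⟨h.connected_right.coe, isAcyclic_coe_of_isAcyclic_spanningCoe h.isAcyclic_right⟩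

lemma edgeSet_union_of_univ (h : IsTreeSplit H₁ H₂ Set.univ r) :
    H₁.edgeSet ∪ H₂.edgeSet = G.edgeSet := by
  rw [← edgeSet_sup, h.sup_eq]
  ext e
  induction e
  simp

end IsTreeSplit

end SimpleGraph.Subgraph

section StackingOrder

open SimpleGraph Subgraph

variable {V : Type*} {n : ℕ} (σ : Fin n ≃ V)

lemma setOf_symm_lt_succ (j : Fin n) :
    {v | (σ.symm v : ℕ) < j + 1} = insert (σ j) {v | (σ.symm v : ℕ) < j} := by
  ext v
  simp only [Set.mem_ofPred_eq, Set.mem_insert_iff, ← σ.symm_apply_eq, Fin.ext_iff]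
  omega

lemma setOf_symm_lt_two (hn : 2 ≤ n) :
    {v | (σ.symm v : ℕ) < 2} = {σ ⟨0, by omega⟩, σ ⟨1, by omega⟩} := by
  ext v
  simp only [Set.mem_ofPred_eq, Set.mem_insert_iff, Set.mem_singleton_iff, ← σ.symm_apply_eq,
    Fin.ext_iff]
  omega

lemma exists_isTreeSplit_of_stacking {G : SimpleGraph V} (hn : 2 ≤ n)
    (h01 : G.Adj (σ ⟨0, by omega⟩) (σ ⟨1, by omega⟩))
    (hstep : ∀ j : Fin n, 2 ≤ (j : ℕ) → ∃ a b : Fin n, a < j ∧ b < j ∧ a ≠ b ∧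
      ∀ i < j, (G.Adj (σ i) (σ j) ↔ i = a ∨ i = b)) :
    ∀ k, 2 ≤ k → k ≤ n →
      ∃ H₁ H₂ : G.Subgraph, IsTreeSplit H₁ H₂ {v | (σ.symm v : ℕ) < k} (σ ⟨0, by omega⟩) := by
  intro k hk
  induction k, hk using Nat.le_induction with
  | base =>
    intro _
    rw [setOf_symm_lt_two σ hn]
    exact ⟨_, _, isTreeSplit_subgraphOfAdj_singletonSubgraph h01⟩
  | succ k hk ih =>
    intro hkn
    obtain ⟨H₁, H₂, hsplit⟩ := ih (by omega)
    let j : Fin n := ⟨k, hkn⟩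
    obtain ⟨a, b, ha, hb, hab, hb0, hnbr⟩ : ∃ a b : Fin n, a < j ∧ b < j ∧ a ≠ b ∧ (b : ℕ) ≠ 0 ∧
        ∀ i < j, (G.Adj (σ i) (σ j) ↔ i = a ∨ i = b) := by
      obtain ⟨a, b, ha, hb, hab, hnbr⟩ := hstep j hk
      by_cases hb0 : (b : ℕ) = 0
      · exact ⟨b, a, hb, ha, hab.symm, by omega, fun i hi ↦ (hnbr i hi).trans or_comm⟩
      · exact ⟨a, b, ha, hb, hab, hb0, hnbr⟩
    have hnbr' : ∀ u ∈ {v | (σ.symm v : ℕ) < k}, G.Adj u (σ j) ↔ u = σ a ∨ u = σ b := by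
      intro u hu
      simpa [σ.symm_apply_eq] using hnbr (σ.symm u) hu
    have hS : ∀ i : Fin n, i < j → σ i ∈ {v | (σ.symm v : ℕ) < k} := fun i hi ↦ by
      simpa only [Set.mem_ofPred_eq, Equiv.symm_apply_apply] using Fin.lt_def.mp hi
    have hne : ∀ {i i' : Fin n}, (i : ℕ) ≠ i' → σ i ≠ σ i' :=
      fun h ↦ σ.injective.ne (Fin.val_ne_iff.mp h)
    rw [show k + 1 = (j : ℕ) + 1 from rfl, setOf_symm_lt_succ]
    exact ⟨_, _, hsplit.sup_subgraphOfAdj (hS a ha) (hS b hb) (hne hb0) (by simp [j])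
      (hne (by simp; omega)) (σ.injective.ne hab) hnbr' ((hnbr' _ (hS a ha)).mpr (.inl rfl))
      ((hnbr' _ (hS b hb)).mpr (.inr rfl))⟩

end StackingOrder

/-- The edges of every maximal outerplanar graph on `n ≥ 2` vertices can be partitioned
into two trees: there are two subgraphs with disjoint edge sets whose union is the whole
edge set, each of which is a tree (connected and acyclic on its vertex set). -/
theorem stmt8 {V : Type*} [Fintype V] [DecidableEq V] (G : SimpleGraph V)
    (h : IsMaxOuterplanar G) (hn : 2 ≤ Fintype.card V) :
    ∃ H₁ H₂ : G.Subgraph,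
      H₁.edgeSet ∪ H₂.edgeSet = G.edgeSet ∧
      Disjoint H₁.edgeSet H₂.edgeSet ∧
      H₁.coe.IsTree ∧ H₂.coe.IsTree := by
  obtain ⟨σ, h01, hstep⟩ := h
  obtain ⟨H₁, H₂, hsplit⟩ := exists_isTreeSplit_of_stacking σ hn (h01 hn)
    (fun j hj ↦ (hstep j hj).imp fun _ ↦ Exists.imp fun _ ⟨ha, hb, hab, _, hnbr⟩ ↦
      ⟨ha, hb, hab, hnbr⟩) _ hn le_rfl
  rw [Set.eq_univ_of_forall (s := {v | (σ.symm v : ℕ) < _}) fun v ↦ (σ.symm v).isLt] at hsplit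
  exact ⟨H₁, H₂, hsplit.edgeSet_union_of_univ, hsplit.disjoint, hsplit.isTree_coe_left,
    hsplit.isTree_coe_right⟩
end

section
/- Under the iterative heavy-path-box construction, a heavy path subtree of depth d with n' vertices fits in a box of width at most 2·2^d·n' and height at most 2·(3/2)^d·n'. More precisely: if boxes B₁,…,B_k have widths w_i and heights h_i with b_i ≥ t_i (h_i = t_i + b_i), and boxes are paired so that w*_i = max{w_{2i−1}, w_{2i}} and t*_i = max{t_{2i−1}, t_{2i}}, then the merged arrangement has width w = 2·Σ_{i=1}^{k/2} w*_i ≤ 2·Σ_{i=1}^{k} w_i and height h ≤ 2·Σ_{i=1}^{k/2} t*_i + max_j b_{2j−1} + max_j b_{2j} ≤ (3/2)·Σ_{i=1}^{k} h_i. -/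
/-!
Both bounds are proved pair by pair. For the width, `max (w (2i)) (w (2i+1))` is at most the sum
of the two nonnegative widths. For the height, each of the two maxima of the `b`'s is bounded by
the corresponding sum, and then `2 max t t' + b + b' ≤ (3/2) (t + b + t' + b')` holds for each
pair because `t ≤ b` and `t' ≤ b'`.
-/

open Finset

theorem Finset.sum_range_two_mul {M : Type*} [AddCommMonoid M] (K : ℕ) (f : ℕ → M) :
    ∑ i ∈ range (2 * K), f i = ∑ i ∈ range K, (f (2 * i) + f (2 * i + 1)) := by
  induction K with
  | zero => simp
  | succ n ih => rw [Nat.mul_succ, sum_range_succ, sum_range_succ, sum_range_succ, ih, add_assoc]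

theorem Finset.sup'_le_sum_of_nonneg {ι M : Type*} [AddCommMonoid M] [LinearOrder M]
    [IsOrderedAddMonoid M] {s : Finset ι} (H : s.Nonempty) {f : ι → M}
    (hf : ∀ i ∈ s, 0 ≤ f i) : s.sup' H f ≤ ∑ i ∈ s, f i :=
  sup'_le _ _ fun _ hj => single_le_sum hf hj

theorem two_mul_max_add_add_le {α : Type*} [Field α] [LinearOrder α] [IsStrictOrderedRing α]
    {t b t' b' : α} (ht : 0 ≤ t) (ht' : 0 ≤ t') (htb : t ≤ b)
    (htb' : t' ≤ b') : 2 * max t t' + b + b' ≤ 3 / 2 * ((t + b) + (t' + b')) := by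
  rcases le_total t t' with h | h
  · rw [max_eq_right h]; linarith
  · rw [max_eq_left h]; linarith

/-- Size analysis of the merged heavy-path-box arrangement. Let `k = 2K` boxes have
widths `w i`, top heights `t i` and bottom heights `b i` (all nonnegative, `t i ≤ b i`),
paired so that `b (2i+1) ≤ b (2i)`. Then the merged arrangement has width
`2 Σ_{i<K} max(w (2i), w (2i+1)) ≤ 2 Σ_{i<2K} w i` and height
`2 Σ_{i<K} max(t (2i), t (2i+1)) + max_j b (2j) + max_j b (2j+1)
  ≤ (3/2) Σ_{i<2K} (t i + b i)`. -/
theorem stmt18 (K : ℕ) (hK : 1 ≤ K) (w t b : ℕ → ℝ)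
    (hw : ∀ i < 2 * K, 0 ≤ w i)
    (ht : ∀ i < 2 * K, 0 ≤ t i)
    (htb : ∀ i < 2 * K, t i ≤ b i) :
    2 * ∑ i ∈ Finset.range K, max (w (2 * i)) (w (2 * i + 1))
      ≤ 2 * ∑ i ∈ Finset.range (2 * K), w i ∧
    2 * ∑ i ∈ Finset.range K, max (t (2 * i)) (t (2 * i + 1))
      + (Finset.range K).sup' (Finset.nonempty_range_iff.mpr (by omega)) (fun i => b (2 * i))
      + (Finset.range K).sup' (Finset.nonempty_range_iff.mpr (by omega)) (fun i => b (2 * i + 1))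
      ≤ (3 / 2) * ∑ i ∈ Finset.range (2 * K), (t i + b i) := by
  have hb : ∀ i < 2 * K, 0 ≤ b i := fun i hi => (ht i hi).trans (htb i hi)
  rw [sum_range_two_mul K w, sum_range_two_mul K fun i => t i + b i]
  constructor
  · gcongr with i hi
    have := mem_range.mp hi
    exact max_le_add_of_nonneg (hw _ (by omega)) (hw _ (by omega))
  · have hEven := sup'_le_sum_of_nonneg (s := range K) (nonempty_range_iff.mpr (by omega))
      (f := fun i => b (2 * i)) fun i hi => hb _ (by have := mem_range.mp hi; omega)
    have hOdd := sup'_le_sum_of_nonneg (s := range K) (nonempty_range_iff.mpr (by omega))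
      (f := fun i => b (2 * i + 1)) fun i hi => hb _ (by have := mem_range.mp hi; omega)
    calc _ ≤ 2 * ∑ i ∈ range K, max (t (2 * i)) (t (2 * i + 1))
          + ∑ i ∈ range K, b (2 * i) + ∑ i ∈ range K, b (2 * i + 1) := by gcongr
      _ = ∑ i ∈ range K, (2 * max (t (2 * i)) (t (2 * i + 1)) + b (2 * i) + b (2 * i + 1)) := by
        rw [mul_sum, ← sum_add_distrib, ← sum_add_distrib]
      _ ≤ ∑ i ∈ range K, 3 / 2 * ((t (2 * i) + b (2 * i)) + (t (2 * i + 1) + b (2 * i + 1))) :=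
        sum_le_sum fun i hi => by
          have := mem_range.mp hi
          exact two_mul_max_add_add_le (ht _ (by omega)) (ht _ (by omega)) (htb _ (by omega))
            (htb _ (by omega))
      _ = _ := (mul_sum ..).symm
end
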